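/- Let $p\in[1,d)$, $r>0$, $\tilde r=r/\sqrt{d+3}$, and let $T_\varepsilon u$ be the piecewise constant average of $u\in L^p(\mathbb{R}^d;\mathbb{R}^m)$ on the cubes $\tilde r\varepsilon k+[0,\tilde r\varepsilon)^d$, $k\in\mathbb{Z}^d$. Then there exists $C=C(p,d,r)>0$ such that for every $\varepsilon>0$: $\int_{B_r}\int_{\mathbb{R}^d}\left|\frac{T_\varepsilon u(x)-u(x)}{\varepsilon}\right|^p dx\,d\xi\le C\,G^{r,p}_\varepsilon(u,\mathbb{R}^d)$, where $G^{r,p}_\varepsilon(u,\mathbb{R}^d)=\int_{B_r}\int_{\mathbb{R}^d}\left|\frac{u(x+\varepsilon\xi)-u(x)}{\varepsilon}\right|^p dx\,d\xi$. -/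

import Mathlib

open MeasureTheory Metric ENNReal Set

/-- The nonlocal energy `G^{r,p}_ε(u, ℝ^d)`. -/
noncomputable def Gen {d m : ℕ} (r p ε : ℝ)
    (u : EuclideanSpace ℝ (Fin d) → EuclideanSpace ℝ (Fin m)) : ℝ≥0∞ :=
  ∫⁻ ξ in ball (0 : EuclideanSpace ℝ (Fin d)) r,
    ∫⁻ x, (‖(ε⁻¹ : ℝ) • (u (x + ε • ξ) - u x)‖₊ : ℝ≥0∞) ^ p

/-- Piecewise constant interpolation at scale `σ`. -/
noncomputable def Tpc {d m : ℕ} (σ : ℝ)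
    (u : EuclideanSpace ℝ (Fin d) → EuclideanSpace ℝ (Fin m))
    (x : EuclideanSpace ℝ (Fin d)) : EuclideanSpace ℝ (Fin m) :=
  ⨍ y in {y : EuclideanSpace ℝ (Fin d) |
      ∀ i, σ * (⌊x i / σ⌋ : ℝ) ≤ y i ∧ y i < σ * ((⌊x i / σ⌋ : ℝ) + 1)}, u y

/-!
Jensen's inequality on the grid cube `Q ∋ x` of side `σ = r̃ε` bounds `|T_ε u(x) - u(x)|^p` by
`σ^{-d} ∫_Q |u(y) - u(x)|^p dy`. The cube has diameter `σ√d < rε`, so `Q ⊆ B(x, rε)`; the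
substitution `y = x + εξ` turns the integral over `B(x, rε)` into
`ε^d ∫_{B_r} |u(x + εξ) - u(x)|^p dξ`, and exchanging the integrals in `x` and `ξ` bounds the
left-hand side, before the trivial outer integral over `B_r`, by `r̃^{-d} G^{r,p}_ε(u)`.
-/

theorem enorm_average_rpow_le_laverage {α E : Type*} [MeasurableSpace α] [NormedAddCommGroup E]
    [NormedSpace ℝ E] {μ : Measure α} [IsFiniteMeasure μ] [NeZero μ] {f : α → E}
    (hf : AEStronglyMeasurable f μ) {p : ℝ} (hp : 1 ≤ p) :
    ‖⨍ x, f x ∂μ‖ₑ ^ p ≤ ⨍⁻ x, ‖f x‖ₑ ^ p ∂μ := by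
  set ν := (μ univ)⁻¹ • μ
  have h_one : ‖⨍ x, f x ∂μ‖ₑ ≤ eLpNorm' f 1 ν := by
    rw [average_eq', eLpNorm']
    simpa only [ENNReal.rpow_one, div_one] using enorm_integral_le_lintegral_enorm (μ := ν) f
  have h_mono : eLpNorm' f 1 ν ≤ eLpNorm' f p ν :=
    eLpNorm'_le_eLpNorm'_of_exponent_le one_pos hp ν (hf.smul_measure _)
  calc ‖⨍ x, f x ∂μ‖ₑ ^ p ≤ eLpNorm' f p ν ^ p :=
        ENNReal.rpow_le_rpow (h_one.trans h_mono) (by linarith)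
    _ = ⨍⁻ x, ‖f x‖ₑ ^ p ∂μ := by
        rw [eLpNorm', ← ENNReal.rpow_mul, one_div_mul_cancel (by linarith), ENNReal.rpow_one]
        rfl

theorem average_smul_sub_const {α E : Type*} [MeasurableSpace α] [NormedAddCommGroup E]
    [NormedSpace ℝ E] [CompleteSpace E] {μ : Measure α} [IsFiniteMeasure μ] [NeZero μ] {f : α → E}
    (hf : Integrable f μ) (c : ℝ) (z : E) :
    ⨍ x, c • (f x - z) ∂μ = c • (⨍ x, f x ∂μ - z) := by
  have hf' : Integrable f ((μ univ)⁻¹ • μ) :=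
    hf.smul_measure (by simp [NeZero.ne μ])
  rw [average_eq', average_eq', integral_smul, integral_sub hf' (integrable_const z),
    integral_const, probReal_univ, one_smul]

theorem setLIntegral_ball_add_eq {G : Type*} [NormedAddCommGroup G] [MeasurableSpace G]
    [BorelSpace G] (μ : Measure G) [μ.IsAddLeftInvariant] (f : G → ℝ≥0∞) (x : G) (ρ : ℝ) :
    ∫⁻ y in ball x ρ, f y ∂μ = ∫⁻ h in ball 0 ρ, f (x + h) ∂μ := by
  rw [← (measurePreserving_add_left μ x).setLIntegral_comp_preimage_emb
    (MeasurableEquiv.addLeft x).measurableEmbedding, preimage_add_left_ball, neg_add_cancel]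

theorem setLIntegral_ball_zero_smul_eq {E : Type*} [NormedAddCommGroup E] [NormedSpace ℝ E]
    [MeasurableSpace E] [BorelSpace E] [FiniteDimensional ℝ E] (μ : Measure E) [μ.IsAddHaarMeasure]
    {ε : ℝ} (hε : 0 < ε) (g : E → ℝ≥0∞) (R : ℝ) :
    ∫⁻ h in ball 0 (ε * R), g h ∂μ
      = ENNReal.ofReal (ε ^ Module.finrank ℝ E) * ∫⁻ ξ in ball 0 R, g (ε • ξ) ∂μ := by
  have hmap : MeasurePreserving (ε • ·) μ
      (ENNReal.ofReal |(ε ^ Module.finrank ℝ E)⁻¹| • μ) :=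
    ⟨measurable_const_smul ε, Measure.map_addHaar_smul μ hε.ne'⟩
  have hpre : (ε • ·) ⁻¹' ball (0 : E) (ε * R) = ball 0 R := by
    ext ξ
    simp [norm_smul, abs_of_pos hε, mul_lt_mul_iff_right₀ hε]
  rw [← hpre, hmap.setLIntegral_comp_preimage_emb (measurableEmbedding_const_smul₀ hε.ne'),
    Measure.restrict_smul, lintegral_smul_measure, smul_eq_mul, ← mul_assoc,
    ← ENNReal.ofReal_mul (by positivity), abs_of_pos (by positivity),
    mul_inv_cancel₀ (by positivity), ENNReal.ofReal_one, one_mul]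

def gridCube {d : ℕ} (σ : ℝ) (x : EuclideanSpace ℝ (Fin d)) : Set (EuclideanSpace ℝ (Fin d)) :=
  {y | ∀ i, σ * (⌊x i / σ⌋ : ℝ) ≤ y i ∧ y i < σ * ((⌊x i / σ⌋ : ℝ) + 1)}

section GridCube

variable {d m : ℕ} {σ : ℝ}

theorem gridCube_eq_preimage (σ : ℝ) (x : EuclideanSpace ℝ (Fin d)) :
    gridCube σ x = (MeasurableEquiv.toLp 2 (Fin d → ℝ)).symm ⁻¹'
      univ.pi fun i => Ico (σ * ⌊x i / σ⌋) (σ * ⌊x i / σ⌋ + σ) := by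
  ext y
  simp [gridCube, mul_add]

theorem volume_gridCube (σ : ℝ) (x : EuclideanSpace ℝ (Fin d)) :
    volume (gridCube σ x) = ENNReal.ofReal σ ^ d := by
  rw [gridCube_eq_preimage, (EuclideanSpace.volume_preserving_symm_measurableEquiv_toLp
    (Fin d)).measure_preimage (MeasurableSet.univ_pi fun _ => measurableSet_Ico).nullMeasurableSet,
    Real.volume_pi_Ico]
  simp

theorem abs_sub_lt_of_mem_gridCube (hσ : 0 < σ) {x y : EuclideanSpace ℝ (Fin d)}
    (hy : y ∈ gridCube σ x) (i : Fin d) : |y i - x i| < σ := by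
  obtain ⟨hlo, hhi⟩ := hy i
  have hx_lo : σ * ⌊x i / σ⌋ ≤ x i := by
    rw [mul_comm, ← le_div_iff₀ hσ]; exact Int.floor_le _
  have hx_hi : x i < σ * (⌊x i / σ⌋ + 1) := by
    rw [mul_comm, ← div_lt_iff₀ hσ]; exact Int.lt_floor_add_one _
  rw [abs_lt]; constructor <;> nlinarith

theorem gridCube_subset_closedBall (hσ : 0 < σ) (x : EuclideanSpace ℝ (Fin d)) :
    gridCube σ x ⊆ closedBall x (σ * √d) := by
  intro y hy
  rw [mem_closedBall, EuclideanSpace.dist_eq, ← Real.sqrt_sq hσ.le, ← Real.sqrt_mul (sq_nonneg _)]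
  refine Real.sqrt_le_sqrt ?_
  calc ∑ i, dist (y i) (x i) ^ 2 ≤ ∑ _i : Fin d, σ ^ 2 := by
        refine Finset.sum_le_sum fun i _ => ?_
        rw [Real.dist_eq]
        exact pow_le_pow_left₀ (abs_nonneg _) (abs_sub_lt_of_mem_gridCube hσ hy i).le 2
    _ = σ ^ 2 * d := by simp [mul_comm]

theorem Tpc_eq_setAverage (σ : ℝ) (u : EuclideanSpace ℝ (Fin d) → EuclideanSpace ℝ (Fin m))
    (x : EuclideanSpace ℝ (Fin d)) : Tpc σ u x = ⨍ y in gridCube σ x, u y := rfl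

theorem enorm_smul_Tpc_sub_rpow_le {p : ℝ} (hσ : 0 < σ) (hp : 1 ≤ p)
    {u : EuclideanSpace ℝ (Fin d) → EuclideanSpace ℝ (Fin m)} {x : EuclideanSpace ℝ (Fin d)}
    (hu : IntegrableOn u (gridCube σ x)) (c : ℝ) :
    ‖c • (Tpc σ u x - u x)‖ₑ ^ p
      ≤ (ENNReal.ofReal σ ^ d)⁻¹ * ∫⁻ y in gridCube σ x, ‖c • (u y - u x)‖ₑ ^ p := by
  have hvol := volume_gridCube σ x
  have : IsFiniteMeasure (volume.restrict (gridCube σ x)) :=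
    isFiniteMeasure_restrict.2 (by simp [hvol])
  have : NeZero (volume.restrict (gridCube σ x)) :=
    ⟨by simp [Measure.restrict_eq_zero, hvol, hσ.not_ge]⟩
  rw [Tpc_eq_setAverage, ← average_smul_sub_const hu, ← ENNReal.div_eq_inv_mul, ← hvol,
    ← setLAverage_eq]
  exact enorm_average_rpow_le_laverage
    ((hu.aestronglyMeasurable.sub aestronglyMeasurable_const).const_smul c) hp

theorem lintegral_enorm_Tpc_sub_rpow_le_of_measurable {p s ε r : ℝ} (hp : 1 ≤ p) (hs : 0 < s)
    (hε : 0 < ε) (hsr : s * √d < r) {u : EuclideanSpace ℝ (Fin d) → EuclideanSpace ℝ (Fin m)}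
    (hum : Measurable u) (hu : MemLp u (ENNReal.ofReal p) volume) :
    ∫⁻ x, ‖ε⁻¹ • (Tpc (s * ε) u x - u x)‖ₑ ^ p ≤ (ENNReal.ofReal s ^ d)⁻¹ * Gen r p ε u := by
  have hσ : 0 < s * ε := mul_pos hs hε
  have hcube (x : EuclideanSpace ℝ (Fin d)) : gridCube (s * ε) x ⊆ ball x (ε * r) :=
    (gridCube_subset_closedBall hσ x).trans (closedBall_subset_ball (by nlinarith))
  have hint (x : EuclideanSpace ℝ (Fin d)) : IntegrableOn u (gridCube (s * ε) x) := by
    have : IsFiniteMeasure (volume.restrict (gridCube (s * ε) x)) :=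
      isFiniteMeasure_restrict.2 (by simp [volume_gridCube])
    exact (hu.restrict _).integrable (ENNReal.one_le_ofReal.2 hp)
  have hmeas : Measurable (Function.uncurry fun (x ξ : EuclideanSpace ℝ (Fin d)) =>
      ‖ε⁻¹ • (u (x + ε • ξ) - u x)‖ₑ ^ p) := by
    fun_prop
  have hball (x : EuclideanSpace ℝ (Fin d)) :
      ∫⁻ y in ball x (ε * r), ‖ε⁻¹ • (u y - u x)‖ₑ ^ p
        = ENNReal.ofReal (ε ^ d) * ∫⁻ ξ in ball 0 r, ‖ε⁻¹ • (u (x + ε • ξ) - u x)‖ₑ ^ p := by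
    rw [setLIntegral_ball_add_eq, setLIntegral_ball_zero_smul_eq volume hε,
      finrank_euclideanSpace_fin]
  calc ∫⁻ x, ‖ε⁻¹ • (Tpc (s * ε) u x - u x)‖ₑ ^ p
      ≤ ∫⁻ x, (ENNReal.ofReal (s * ε) ^ d)⁻¹ *
          ∫⁻ y in ball x (ε * r), ‖ε⁻¹ • (u y - u x)‖ₑ ^ p :=
        lintegral_mono fun x => (enorm_smul_Tpc_sub_rpow_le hσ hp (hint x) _).trans
          (by gcongr; exact hcube x)
    _ = (ENNReal.ofReal (s * ε) ^ d)⁻¹ * ENNReal.ofReal (ε ^ d) * Gen r p ε u := by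
        simp_rw [hball]
        rw [lintegral_const_mul' _ _ (by simp [hσ.not_ge]), lintegral_const_mul' _ _ (by simp),
          lintegral_lintegral_swap hmeas.aemeasurable, mul_assoc]
        rfl
    _ = (ENNReal.ofReal s ^ d)⁻¹ * Gen r p ε u := by
        rw [ENNReal.ofReal_mul hs.le, mul_pow, ENNReal.mul_inv (by simp) (by simp),
          ENNReal.ofReal_pow hε.le, mul_assoc _ _ (ENNReal.ofReal ε ^ d),
          ENNReal.inv_mul_cancel (by simp [hε]) (by simp), mul_one]

theorem Tpc_congr_ae (σ : ℝ) {u v : EuclideanSpace ℝ (Fin d) → EuclideanSpace ℝ (Fin m)}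
    (h : u =ᵐ[volume] v) : Tpc σ u = Tpc σ v :=
  funext fun _ => average_congr (ae_restrict_of_ae h)

theorem Gen_congr_ae (r p ε : ℝ) {u v : EuclideanSpace ℝ (Fin d) → EuclideanSpace ℝ (Fin m)}
    (h : u =ᵐ[volume] v) : Gen r p ε u = Gen r p ε v := by
  refine setLIntegral_congr_fun measurableSet_ball fun ξ _ => lintegral_congr_ae ?_
  have h_shift : (fun x => u (x + ε • ξ)) =ᵐ[volume] fun x => v (x + ε • ξ) :=
    (measurePreserving_add_right volume (ε • ξ)).quasiMeasurePreserving.ae_eq_comp h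
  filter_upwards [h, h_shift] with x hx hx_shift
  rw [hx, hx_shift]

theorem lintegral_enorm_Tpc_sub_rpow_le {p s ε r : ℝ} (hp : 1 ≤ p) (hs : 0 < s)
    (hε : 0 < ε) (hsr : s * √d < r) {u : EuclideanSpace ℝ (Fin d) → EuclideanSpace ℝ (Fin m)}
    (hu : MemLp u (ENNReal.ofReal p) volume) :
    ∫⁻ x, ‖ε⁻¹ • (Tpc (s * ε) u x - u x)‖ₑ ^ p ≤ (ENNReal.ofReal s ^ d)⁻¹ * Gen r p ε u := by
  have huv := hu.1.ae_eq_mk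
  calc ∫⁻ x, ‖ε⁻¹ • (Tpc (s * ε) u x - u x)‖ₑ ^ p
      = ∫⁻ x, ‖ε⁻¹ • (Tpc (s * ε) (hu.1.mk u) x - hu.1.mk u x)‖ₑ ^ p := by
        refine lintegral_congr_ae ?_
        filter_upwards [huv] with x hx
        rw [Tpc_congr_ae _ huv, hx]
    _ ≤ (ENNReal.ofReal s ^ d)⁻¹ * Gen r p ε (hu.1.mk u) :=
        lintegral_enorm_Tpc_sub_rpow_le_of_measurable hp hs hε hsr
          hu.1.stronglyMeasurable_mk.measurable (hu.ae_eq huv)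
    _ = (ENNReal.ofReal s ^ d)⁻¹ * Gen r p ε u := by rw [Gen_congr_ae _ _ _ huv]

end GridCube

theorem pc_interpolation_error_general (d m : ℕ) (p r : ℝ) (hp : 1 ≤ p) (hr : 0 < r) :
    ∃ C : ℝ, 0 < C ∧
      ∀ (u : EuclideanSpace ℝ (Fin d) → EuclideanSpace ℝ (Fin m)) (ε : ℝ),
        MemLp u (ENNReal.ofReal p) volume → 0 < ε →
        (∫⁻ _ξ in ball (0 : EuclideanSpace ℝ (Fin d)) r,
            ∫⁻ x, (‖(ε⁻¹ : ℝ) • (Tpc ((r / Real.sqrt (d + 3)) * ε) u x - u x)‖₊ : ℝ≥0∞) ^ p)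
          ≤ ENNReal.ofReal C * Gen r p ε u := by
  set s := r / √(d + 3)
  have hs : 0 < s := by positivity
  have hsr : s * √d < r := by
    rw [div_mul_eq_mul_div, div_lt_iff₀ (by positivity)]
    exact mul_lt_mul_of_pos_left (Real.sqrt_lt_sqrt (by positivity) (by linarith)) hr
  set B := volume (ball (0 : EuclideanSpace ℝ (Fin d)) r)
  have hB : B ≠ ∞ := measure_ball_lt_top.ne
  refine ⟨B.toReal * (s ^ d)⁻¹,
    mul_pos (ENNReal.toReal_pos (measure_ball_pos volume 0 hr).ne' hB) (by positivity),
    fun u ε hu hε => ?_⟩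
  rw [setLIntegral_const, mul_comm, ENNReal.ofReal_mul ENNReal.toReal_nonneg,
    ENNReal.ofReal_toReal hB, ENNReal.ofReal_inv_of_pos (by positivity),
    ENNReal.ofReal_pow hs.le, mul_assoc]
  gcongr
  exact lintegral_enorm_Tpc_sub_rpow_le hp hs hε hsr hu

/-- Error estimate for piecewise-constant discretization in terms of `G^{r,p}_ε`. -/
theorem pc_interpolation_error (d m : ℕ) (p r : ℝ) (hp : 1 ≤ p) (hpd : p < d) (hr : 0 < r) :
    ∃ C : ℝ, 0 < C ∧
      ∀ (u : EuclideanSpace ℝ (Fin d) → EuclideanSpace ℝ (Fin m)) (ε : ℝ),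
        MemLp u (ENNReal.ofReal p) volume → 0 < ε →
        (∫⁻ _ξ in ball (0 : EuclideanSpace ℝ (Fin d)) r,
            ∫⁻ x, (‖(ε⁻¹ : ℝ) • (Tpc ((r / Real.sqrt (d + 3)) * ε) u x - u x)‖₊ : ℝ≥0∞) ^ p)
          ≤ ENNReal.ofReal C * Gen r p ε u :=
  pc_interpolation_error_general d m p r hp hr
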